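/- arXiv:math/0411289 — 10 statements merged into one kernel-verified Lean document; each statement's English description precedes it below -/
import Mathlib

section
/- If {a_s + n_s ℤ : s = 1,…,k} is a partition of ℤ into k > 1 residue classes with moduli 1 < n_1 ≤ n_2 ≤ ⋯ ≤ n_k, then n_{k-1} = n_k; i.e., the largest modulus occurs at least twice. -/
/-!
Suppose the largest modulus `m > 1` belonged to a single class. Take a common multiple `N` of the
moduli, a primitive `m`-th root of unity `ζ`, and the additive character `x ↦ ζ ^ x` of `ℤ/N`.
Its values sum to `0`, and the partition splits this sum into sums over the residue classes.
A class of modulus `d < m` is invariant under translation by `d`, which multiplies the character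
by `ζ ^ d ≠ 1`, so its sum vanishes; on the class of modulus `m` the character is constant, so
that sum is nonzero.
-/

open Finset

theorem Fintype.sum_eq_sum_sum_filter_of_existsUnique {ι α M : Type*} [Fintype ι] [Fintype α]
    [AddCommMonoid M] (P : ι → α → Prop) [∀ i, DecidablePred (P i)] (h : ∀ x, ∃! i, P i x)
    (f : α → M) : ∑ x, f x = ∑ i, ∑ x with P i x, f x := by
  rw [Finset.sum_comm' (t' := univ) (s' := fun x => univ.filter (P · x)) (by simp)]
  refine Finset.sum_congr rfl fun x _ => ?_
  obtain ⟨i, hi, huniq⟩ := h x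
  rw [show univ.filter (P · x) = {i} by ext j; simpa using ⟨huniq j, fun hj => hj ▸ hi⟩]
  simp

namespace AddChar

variable {G H R : Type*} [AddGroup G] [Fintype G] [AddGroup H] [DecidableEq H]
  [CommSemiring R] [IsDomain R] (ψ : AddChar G R) (π : G →+ H) (b : H)

theorem sum_fiber_eq_zero_of_map_ne_one {g : G} (hg : π g = 0) (hψg : ψ g ≠ 1) :
    ∑ x with π x = b, ψ x = 0 := by
  refine eq_zero_of_mul_eq_self_left hψg ?_
  rw [mul_sum]
  refine sum_equiv (Equiv.addRight g) (by simp [hg]) fun x _ => ?_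
  simp [map_add_eq_mul, mul_comm]

theorem sum_fiber_ne_zero_of_ker_le [CharZero R] (hker : ∀ g, π g = 0 → ψ g = 1) {x₀ : G}
    (hx₀ : π x₀ = b) : ∑ x with π x = b, ψ x ≠ 0 := by
  have hconst : ∀ x ∈ univ.filter (π · = b), ψ x = ψ x₀ := fun x hx => by
    have : π (x - x₀) = 0 := by simp_all
    rw [← sub_add_cancel x x₀, map_add_eq_mul, hker _ this, one_mul]
  rw [sum_congr rfl hconst, sum_const]
  exact smul_ne_zero (card_ne_zero.2 ⟨x₀, by simpa⟩) (ψ.val_isUnit x₀).ne_zero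

end AddChar

theorem ZMod.castHom_eq_intCast_iff_dvd_sub {N d : ℕ} [NeZero N] (hd : d ∣ N) (x : ZMod N)
    (a : ℤ) : ZMod.castHom hd (ZMod d) x = a ↔ (d : ℤ) ∣ x.val - a := by
  rw [ZMod.castHom_apply, ZMod.cast_eq_val, ← Int.cast_natCast, eq_comm,
    ZMod.intCast_eq_intCast_iff_dvd_sub, dvd_sub_comm]

theorem exists_ne_le_modulus_of_partition {ι : Type*} [Fintype ι] (a : ι → ℤ) (n : ι → ℕ)
    (hn : ∀ s, 0 < n s) (hcover : ∀ x : ℤ, ∃! s, (n s : ℤ) ∣ x - a s) (L : ι) (hL : 1 < n L) :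
    ∃ s ≠ L, n L ≤ n s := by
  by_contra! hlt
  set N := ∏ s, n s
  have hdvd : ∀ s, n s ∣ N := fun s => dvd_prod_of_mem n (mem_univ s)
  have : NeZero N := ⟨prod_ne_zero_iff.2 fun s _ => (hn s).ne'⟩
  obtain ⟨ζ, hζ⟩ : ∃ ζ : ℂ, IsPrimitiveRoot ζ (n L) :=
    ⟨_, Complex.isPrimitiveRoot_exp _ (by omega)⟩
  let ψ := AddChar.zmodChar N ((hζ.pow_eq_one_iff_dvd N).2 (hdvd L))
  let π s : ZMod N →+ ZMod (n s) := (ZMod.castHom (hdvd s) _).toAddMonoidHom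
  have hπ : ∀ s x, π s x = a s ↔ (n s : ℤ) ∣ x.val - a s := fun s x =>
    ZMod.castHom_eq_intCast_iff_dvd_sub (hdvd s) x (a s)
  have hψ : ∀ m : ℕ, ψ m = ζ ^ m := AddChar.zmodChar_apply' _
  have htotal : ∑ x, ψ x = 0 := AddChar.sum_eq_zero_of_ne_one <| AddChar.ne_one_iff.2
    ⟨(1 : ℕ), by rw [hψ, pow_one]; exact hζ.ne_one hL⟩
  have hsmall : ∀ s ≠ L, ∑ x with π s x = a s, ψ x = 0 := fun s hs =>
    ψ.sum_fiber_eq_zero_of_map_ne_one (π s) _ (g := n s) (by simp [π])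
      (by rw [hψ]; exact hζ.pow_ne_one_of_pos_of_lt (hn s).ne' (hlt s hs))
  have hlast : ∑ x with π L x = a L, ψ x ≠ 0 := by
    refine ψ.sum_fiber_ne_zero_of_ker_le (π L) _ (fun g hg => ?_) (x₀ := (a L : ZMod N))
      (by simp [π])
    rwa [← ZMod.natCast_zmod_val g, hψ, hζ.pow_eq_one_iff_dvd, ← ZMod.natCast_eq_zero_iff,
      ← ZMod.cast_eq_val]
  rw [Fintype.sum_eq_sum_sum_filter_of_existsUnique (fun s x => π s x = a s)
    (fun x => by simpa only [hπ] using hcover x.val),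
    sum_eq_single_of_mem L (mem_univ L) fun s _ hs => hsmall s hs] at htotal
  exact hlast htotal

theorem stmt_0 (k : ℕ) (hk : 1 < k) (a : Fin k → ℤ) (n : Fin k → ℕ)
    (hmono : Monotone n) (h1 : ∀ s, 1 < n s)
    (hcover : ∀ x : ℤ, ∃! s : Fin k, (n s : ℤ) ∣ x - a s) :
    n ⟨k - 2, by omega⟩ = n ⟨k - 1, by omega⟩ := by
  obtain ⟨s, hs, hle⟩ := exists_ne_le_modulus_of_partition a n
    (fun s => Nat.zero_lt_of_lt (h1 s)) hcover ⟨k - 1, by omega⟩ (h1 _)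
  have hs' : s ≤ ⟨k - 2, by omega⟩ := by
    have : s.val ≠ k - 1 := fun h => hs (Fin.ext h)
    exact Fin.le_def.2 (by dsimp only; omega)
  exact le_antisymm (hmono (Fin.mk_le_mk.2 (by omega))) (hle.trans (hmono hs'))
end

section
/- If {a_s + n_s ℤ}_{s=1}^k is a disjoint cover of ℤ, then the sum of the reciprocals of the moduli equals 1: ∑_{s=1}^k 1/n_s = 1. -/
theorem stmt_1 (k : ℕ) (a : Fin k → ℤ) (n : Fin k → ℕ) (hn : ∀ s, 0 < n s)
    (hcover : ∀ x : ℤ, ∃! s : Fin k, (n s : ℤ) ∣ x - a s) :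
    ∑ s : Fin k, (1 : ℚ) / n s = 1 := by
  classical
  set N : ℕ := ∏ s, n s with hN
  have hNpos : 0 < N := Finset.prod_pos (fun s _ => hn s)
  have hdvd : ∀ s : Fin k, n s ∣ N := fun s => Finset.dvd_prod_of_mem n (Finset.mem_univ s)
  set f : ℤ → Fin k := fun x => (hcover x).choose with hfdef
  have hf : ∀ (x : ℤ) (s : Fin k), f x = s ↔ (n s : ℤ) ∣ x - a s := by
    intro x s
    constructor
    · rintro rfl; exact (hcover x).choose_spec.1
    · intro h; exact ((hcover x).choose_spec.2 s h).symm
  have hcard : (Finset.Ico (0:ℤ) N).card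
      = ∑ s : Fin k, ((Finset.Ico (0:ℤ) N).filter (fun x => f x = s)).card :=
    Finset.card_eq_sum_card_fiberwise (fun x _ => Finset.mem_univ (f x))
  have hfiber : ∀ s : Fin k,
      ((Finset.Ico (0:ℤ) N).filter (fun x => f x = s)).card = N / n s := by
    intro s
    have hrpos : (0:ℤ) < (n s : ℤ) := by exact_mod_cast hn s
    have hrw : ((Finset.Ico (0:ℤ) N).filter (fun x => f x = s))
        = ((Finset.Ico (0:ℤ) N).filter (fun x => x ≡ a s [ZMOD (n s)])) := by
      apply Finset.filter_congr
      intro x _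
      rw [hf x s]
      constructor
      · intro h; exact Int.modEq_iff_dvd.mpr (dvd_sub_comm.mp h)
      · intro h; exact dvd_sub_comm.mp (Int.modEq_iff_dvd.mp h)
    obtain ⟨m, hm⟩ := hdvd s
    have hm' : N / n s = m := by
      rw [hm]; exact Nat.mul_div_cancel_left m (hn s)
    have key := Int.Ico_filter_modEq_card (0:ℤ) (N:ℤ) hrpos (a s)
    have hne : ((n s : ℚ)) ≠ 0 := Nat.cast_ne_zero.mpr (hn s).ne'
    have h1 : ((N:ℤ) - a s) / ((n s : ℤ) : ℚ) = ((0:ℤ) - a s) / ((n s : ℤ) : ℚ) + (m:ℤ) := by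
      push_cast
      field_simp
      push_cast [hm]
      ring
    rw [h1, Int.ceil_add_intCast] at key
    have h2 : (⌈((0:ℤ) - a s) / ((n s : ℤ) : ℚ)⌉ + (m:ℤ) - ⌈((0:ℤ) - a s) / ((n s : ℤ) : ℚ)⌉) = (m:ℤ) := by ring
    rw [h2, max_eq_left (by positivity)] at key
    rw [hrw, hm']
    exact_mod_cast key
  have hNsum : (N : ℚ) = ∑ s : Fin k, ((N / n s : ℕ) : ℚ) := by
    have hc : (Finset.Ico (0:ℤ) N).card = N := by
      rw [Int.card_Ico]; simp
    rw [hc] at hcard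
    simp only [hfiber] at hcard
    exact_mod_cast hcard
  have hterm : ∀ s : Fin k, (1 : ℚ) / n s = ((N / n s : ℕ) : ℚ) / N := by
    intro s
    have hne : ((n s : ℚ)) ≠ 0 := Nat.cast_ne_zero.mpr (hn s).ne'
    have hNe : ((N : ℚ)) ≠ 0 := Nat.cast_ne_zero.mpr hNpos.ne'
    rw [Nat.cast_div (hdvd s) hne]
    field_simp
  rw [Finset.sum_congr rfl (fun s _ => hterm s), ← Finset.sum_div, ← hNsum,
    div_self (Nat.cast_ne_zero.mpr hNpos.ne' : (N:ℚ) ≠ 0)]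
end

section
/- Let {a_s + n_s ℤ}_{s=1}^k be a disjoint cover of ℤ. For every nonempty proper subset J of {1,…,k} there exists a subset I of {1,…,k} with I ≠ J such that ∑_{s∈I} 1/n_s = ∑_{s∈J} 1/n_s. -/
/-!
Let `N` be a common multiple of the moduli, `m_s = N / n_s`, and `ω` a primitive `N`-th root of
unity. Every `N`-th root of unity `ω^x` is a root of the factor `X^(m_s) - ω^(m_s a_s)` for the
class `s` containing `x`, and counting residues mod `N` gives `∑ m_s = N`; hence
`∏_s (X^(m_s) - ω^(m_s a_s)) = X^N - 1`. Expanding the product, the coefficient of `X^M` with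
`M = ∑_{s ∈ J} m_s` is a sum over the sets `I` with `∑_{s ∈ I} m_s = M`. If `J` were the only one,
this coefficient would be `∏_{s ∉ J} (-ω^(m_s a_s)) ≠ 0`, whereas `0 < M < N` makes it vanish in
`X^N - 1`.
-/

open Finset Polynomial

theorem Int.card_filter_modEq_Ico_of_dvd {n N : ℕ} (hn : 0 < n) (hnN : n ∣ N) (v : ℤ) :
    #{x ∈ Ico (0 : ℤ) N | x ≡ v [ZMOD n]} = N / n := by
  obtain ⟨q, rfl⟩ := hnN
  have hq : ((n : ℚ) * q - v) / n = (0 - v) / n + (q : ℤ) := by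
    field_simp; push_cast; ring
  rw [← Nat.cast_inj (R := ℤ), Nat.mul_div_cancel_left q hn,
    Int.Ico_filter_modEq_card _ _ (by exact_mod_cast hn)]
  push_cast
  rw [hq, Int.ceil_add_intCast]
  simp

theorem Polynomial.coeff_prod_X_pow_add_C {R ι : Type*} [CommSemiring R] [DecidableEq ι]
    (s : Finset ι) (m : ι → ℕ) (c : ι → R) (M : ℕ) :
    (∏ i ∈ s, (X ^ m i + C (c i))).coeff M =
      ∑ t ∈ s.powerset with ∑ i ∈ t, m i = M, ∏ i ∈ s \ t, c i := by
  rw [prod_add, finsetSum_coeff, sum_filter]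
  refine sum_congr rfl fun t _ => ?_
  rw [prod_pow_eq_pow_sum, ← map_prod, mul_comm, coeff_C_mul_X_pow]
  simp only [eq_comm]

theorem Polynomial.exists_ne_sum_eq_of_prod_X_pow_sub_C_eq_X_pow_sub_one {R ι : Type*}
    [CommRing R] [IsDomain R] [Fintype ι] {m : ι → ℕ} {c : ι → R}
    (hc : ∀ i, c i ≠ 0) {N : ℕ} (h : ∏ i, (X ^ m i - C (c i)) = X ^ N - 1) {J : Finset ι}
    (hJ0 : ∑ i ∈ J, m i ≠ 0) (hJN : ∑ i ∈ J, m i ≠ N) :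
    ∃ I ≠ J, ∑ i ∈ I, m i = ∑ i ∈ J, m i := by
  classical
  by_contra! hJ
  have hfilter : {t ∈ (univ : Finset ι).powerset | ∑ i ∈ t, m i = ∑ i ∈ J, m i} = {J} := by
    ext t
    simp only [mem_filter, mem_powerset, subset_univ, true_and, mem_singleton]
    exact ⟨not_imp_not.1 (hJ t), fun ht => ht ▸ rfl⟩
  have hcoeff : (∏ i, (X ^ m i + C (-c i))).coeff (∑ i ∈ J, m i) =
      (X ^ N - 1 : R[X]).coeff (∑ i ∈ J, m i) := by
    simp only [map_neg, ← sub_eq_add_neg, h]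
  rw [coeff_prod_X_pow_add_C, hfilter, sum_singleton, coeff_sub, coeff_X_pow, coeff_one,
    if_neg hJN, if_neg hJ0, sub_zero] at hcoeff
  exact prod_ne_zero_iff.2 (fun i _ => neg_ne_zero.2 (hc i)) hcoeff

def IsDisjointCover {ι : Type*} (a : ι → ℤ) (n : ι → ℕ) : Prop :=
  ∀ x : ℤ, ∃! s, (n s : ℤ) ∣ x - a s

namespace IsDisjointCover

variable {ι : Type*} [Fintype ι] {a : ι → ℤ} {n : ι → ℕ}

theorem sum_div_eq (h : IsDisjointCover a n) (hn : ∀ s, 0 < n s) {N : ℕ} (hdvd : ∀ s, n s ∣ N) :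
    ∑ s, N / n s = N := by
  classical
  choose f hf using h
  calc ∑ s, N / n s = ∑ s, #{x ∈ Ico (0 : ℤ) N | f x = s} := by
        refine sum_congr rfl fun s _ => ?_
        rw [← Int.card_filter_modEq_Ico_of_dvd (hn s) (hdvd s) (a s)]
        refine congrArg card (filter_congr fun x _ => ?_)
        rw [Int.modEq_comm, Int.modEq_iff_dvd]
        exact ⟨fun hx => ((hf x).2 s hx).symm, fun hx => hx ▸ (hf x).1⟩
    _ = #(Ico (0 : ℤ) N) := (card_eq_sum_card_fiberwise fun x _ => mem_univ (f x)).symm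
    _ = N := by simp

theorem prod_X_pow_sub_C_eq_X_pow_sub_one {K : Type*} [Field K] (h : IsDisjointCover a n)
    (hn : ∀ s, 0 < n s) {N : ℕ} (hN : 0 < N) (hdvd : ∀ s, n s ∣ N) {ω : K}
    (hω : IsPrimitiveRoot ω N) :
    ∏ s, (X ^ (N / n s) - C (ω ^ ((N / n s : ℕ) * a s))) = X ^ N - 1 := by
  have hm : ∀ s, N / n s ≠ 0 := fun s => (Nat.div_pos (Nat.le_of_dvd hN (hdvd s)) (hn s)).ne'
  set P := ∏ s, (X ^ (N / n s) - C (ω ^ ((N / n s : ℕ) * a s)))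
  have hP : P.Monic := monic_prod_of_monic _ _ fun s _ => monic_X_pow_sub_C _ (hm s)
  have hQ : (X ^ N - 1 : K[X]).Monic := by simpa using monic_X_pow_sub_C (1 : K) hN.ne'
  have hdeg : P.degree = N := by
    rw [degree_eq_natDegree hP.ne_zero,
      natDegree_prod_of_monic _ _ fun s _ => monic_X_pow_sub_C _ (hm s)]
    simp only [natDegree_X_pow_sub_C, h.sum_div_eq hn hdvd]
  refine eq_of_degree_sub_lt_of_eval_finset_eq (nthRootsFinset N (1 : K)) ?_ fun z hz => ?_
  · rw [hω.card_nthRootsFinset, ← hdeg]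
    refine degree_sub_lt_left ?_ hP.ne_zero (by rw [hP.leadingCoeff, hQ.leadingCoeff])
    rw [hdeg, ← C_1, degree_X_pow_sub_C hN]
  · have : NeZero N := ⟨hN.ne'⟩
    have hzN := (mem_nthRootsFinset hN _).1 hz
    obtain ⟨i, -, rfl⟩ := hω.eq_pow_of_pow_eq_one hzN
    obtain ⟨s, ⟨d, hd⟩, -⟩ := h i
    rw [eval_sub, eval_pow, eval_X, eval_one, hzN, sub_self, eval_prod]
    refine prod_eq_zero (mem_univ s) ?_
    rw [eval_sub, eval_pow, eval_X, eval_C, sub_eq_zero, ← zpow_natCast, ← zpow_natCast, ← zpow_mul]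
    have hmn : ((N / n s : ℕ) : ℤ) * n s = N := by exact_mod_cast Nat.div_mul_cancel (hdvd s)
    have hi : (i : ℤ) * (N / n s : ℕ) = (N / n s : ℕ) * a s + N * d := by
      linear_combination ((N / n s : ℕ) : ℤ) * hd + d * hmn
    rw [hi, zpow_add₀ (hω.ne_zero hN.ne'), zpow_mul ω N d, hω.zpow_eq_one, one_zpow, mul_one]

end IsDisjointCover

theorem stmt_2 (k : ℕ) (a : Fin k → ℤ) (n : Fin k → ℕ) (hn : ∀ s, 0 < n s)
    (hcover : ∀ x : ℤ, ∃! s : Fin k, (n s : ℤ) ∣ x - a s)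
    (J : Finset (Fin k)) (hJne : J.Nonempty) (hJprop : J ≠ Finset.univ) :
    ∃ I : Finset (Fin k), I ≠ J ∧
      ∑ s ∈ I, (1 : ℚ) / n s = ∑ s ∈ J, (1 : ℚ) / n s := by
  set N := univ.lcm n
  have hdvd : ∀ s, n s ∣ N := fun s => dvd_lcm (mem_univ s)
  have hN : 0 < N := Nat.pos_of_ne_zero fun h0 => by
    obtain ⟨s, -, hs⟩ := lcm_eq_zero_iff.1 h0
    exact (hn s).ne' hs
  have hm : ∀ s, 0 < N / n s := fun s => Nat.div_pos (Nat.le_of_dvd hN (hdvd s)) (hn s)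
  have hsum : ∀ I : Finset (Fin k), ∑ s ∈ I, (1 : ℚ) / n s = (∑ s ∈ I, N / n s : ℕ) / N := by
    intro I
    push_cast [sum_div, Nat.cast_div (hdvd _) (Nat.cast_ne_zero.2 (hn _).ne')]
    refine sum_congr rfl fun s _ => ?_
    field_simp
  have hJ0 : ∑ s ∈ J, N / n s ≠ 0 := (sum_pos (fun s _ => hm s) hJne).ne'
  have hJN : ∑ s ∈ J, N / n s ≠ N := by
    obtain ⟨t, -, ht⟩ := exists_of_ssubset (ssubset_univ_iff.2 hJprop)
    refine (lt_of_lt_of_eq ?_ (IsDisjointCover.sum_div_eq hcover hn hdvd)).ne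
    exact sum_lt_sum_of_subset (subset_univ J) (mem_univ t) ht (hm t) fun _ _ _ => Nat.zero_le _
  obtain ⟨I, hIJ, hI⟩ := exists_ne_sum_eq_of_prod_X_pow_sub_C_eq_X_pow_sub_one
    (fun s => zpow_ne_zero _ (Complex.exp_ne_zero _))
    (IsDisjointCover.prod_X_pow_sub_C_eq_X_pow_sub_one hcover hn hN hdvd
      (Complex.isPrimitiveRoot_exp N hN.ne')) hJ0 hJN
  exact ⟨I, hIJ, by rw [hsum, hsum, hI]⟩
end

section
/- Let A = {a_s + n_s ℤ}_{s=1}^k be a finite system of residue classes and let m_1,…,m_k be integers with gcd(m_s, n_s) = 1 for each s. Let S = { {∑_{s∈I} m_s/n_s} : I ⊆ {1,…,k} } be the set of fractional parts of subset sums. If A covers |S| consecutive integers (each at least once), then A covers every integer. -/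
/-! With `e(q) = exp (2πiq)` and `m` coprime to `n`, an integer `x` lies in `a + nℤ` iff
`e(m(x - a)/n) = 1`, so `x` is covered iff `f(x) = ∏ₛ (1 - e(mₛ(x - aₛ)/nₛ))` vanishes.
Expanding the product writes `f(x) = ∑_I c_I · e(∑_{s ∈ I} mₛ/nₛ)^x`, an exponential sum whose
bases take at most `|S|` distinct values, since `e` only sees fractional parts. By Vandermonde,
such a sum vanishing at `|S|` consecutive integers has all its grouped coefficients zero, so it
vanishes at every integer. -/

open Finset Real
open scoped FourierTransform

section ExponentialSums

variable {K : Type*} [Field K]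

theorem Finset.coeff_eq_zero_of_sum_mul_zpow_eq_zero {T : Finset K} (hT : (0 : K) ∉ T)
    {c : K → K} (x₀ : ℤ) (h : ∀ j < #T, ∑ z ∈ T, c z * z ^ (x₀ + j) = 0) :
    ∀ z ∈ T, c z = 0 := by
  have hne : ∀ z ∈ T, z ≠ 0 := fun z hz h0 => hT (h0 ▸ hz)
  set e := T.equivFin
  have hv := Matrix.eq_zero_of_forall_pow_sum_mul_pow_eq_zero
    (f := fun i => ((e.symm i : T) : K)) (v := fun i => c (e.symm i) * (e.symm i : K) ^ x₀)
    (Subtype.val_injective.comp e.symm.injective) fun j => by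
      rw [← h j j.2, ← T.sum_coe_sort, ← e.symm.sum_comp]
      refine sum_congr rfl fun i _ => ?_
      rw [zpow_add₀ (hne _ (e.symm i).2), zpow_natCast, mul_assoc]
  intro z hz
  have hz' := congrFun hv (e ⟨z, hz⟩)
  simp only [Equiv.symm_apply_apply, Pi.zero_apply] at hz'
  exact (mul_eq_zero.mp hz').resolve_right (zpow_ne_zero _ (hne z hz))

theorem Finset.sum_mul_zpow_eq_zero_of_consecutive [DecidableEq K] {ι : Type*} {A : Finset ι}
    {d f : ι → K} (hf : ∀ i ∈ A, f i ≠ 0) {N : ℕ} (hN : #(A.image f) ≤ N) (x₀ : ℤ)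
    (h : ∀ j < N, ∑ i ∈ A, d i * f i ^ (x₀ + j) = 0) (x : ℤ) :
    ∑ i ∈ A, d i * f i ^ x = 0 := by
  set c : K → K := fun z => ∑ i ∈ A with f i = z, d i
  have regroup : ∀ y : ℤ, ∑ i ∈ A, d i * f i ^ y = ∑ z ∈ A.image f, c z * z ^ y := by
    intro y
    rw [← sum_fiberwise_of_maps_to (fun i hi => mem_image_of_mem f hi)]
    refine sum_congr rfl fun z _ => ?_
    rw [sum_mul]
    exact sum_congr rfl fun i hi => by rw [(mem_filter.mp hi).2]
  have hc := (A.image f).coeff_eq_zero_of_sum_mul_zpow_eq_zero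
    (fun h0 => by obtain ⟨i, hi, hi0⟩ := mem_image.mp h0; exact hf i hi hi0) x₀
    fun j hj => (regroup _).symm.trans (h j (hj.trans_le hN))
  rw [regroup]
  exact sum_eq_zero fun z hz => by rw [hc z hz, zero_mul]

theorem Finset.prod_one_sub_mul_zpow {ι : Type*} (A : Finset ι) (β u : ι → K) (x : ℤ) :
    ∏ s ∈ A, (1 - β s * u s ^ x) = ∑ I ∈ A.powerset, (∏ s ∈ I, -β s) * (∏ s ∈ I, u s) ^ x := by
  classical
  have hterm : ∀ s, 1 - β s * u s ^ x = -β s * u s ^ x + 1 := fun s => by ring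
  rw [prod_congr rfl fun s _ => hterm s, prod_add]
  simp only [prod_const_one, mul_one, prod_mul_distrib, prod_zpow]

end ExponentialSums

theorem AddChar.map_sum_eq_prod {A M ι : Type*} [AddCommMonoid A] [CommMonoid M]
    (ψ : AddChar A M) (s : Finset ι) (f : ι → A) : ψ (∑ i ∈ s, f i) = ∏ i ∈ s, ψ (f i) := by
  induction s using Finset.cons_induction with
  | empty => simp
  | cons a s _ ih => rw [sum_cons, map_add_eq_mul, ih, prod_cons]

/-- `q ↦ exp (2πiq)` on `ℚ`. -/
noncomputable def ratFourierChar : AddChar ℚ ℂ :=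
  Circle.coeHom.compAddChar (𝐞.compAddMonoidHom (Rat.castHom ℝ : ℚ →+ ℝ))

theorem ratFourierChar_eq_one_iff {q : ℚ} : ratFourierChar q = 1 ↔ ∃ z : ℤ, q = z := by
  change ((𝐞 q : Circle) : ℂ) = 1 ↔ _
  rw [Circle.coe_eq_one, fourierChar_apply', Circle.exp_eq_one]
  refine exists_congr fun z => ⟨fun h => ?_, fun h => by rw [h]; push_cast; ring⟩
  have : (q : ℝ) = z := by nlinarith [pi_pos]
  exact_mod_cast this

theorem ratFourierChar_ne_zero (q : ℚ) : ratFourierChar q ≠ 0 :=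
  Circle.coe_ne_zero _

theorem ratFourierChar_fract (q : ℚ) : ratFourierChar (Int.fract q) = ratFourierChar q := by
  conv_rhs => rw [← Int.fract_add_floor q]
  rw [AddChar.map_add_eq_mul, ratFourierChar_eq_one_iff.mpr ⟨_, rfl⟩, mul_one]

theorem ratFourierChar_mul_zpow_eq_one_iff {m : ℤ} {n : ℕ} (hmn : IsCoprime m n) (hn : 0 < n)
    (a x : ℤ) :
    ratFourierChar (-(m * a) / n) * ratFourierChar (m / n) ^ x = 1 ↔ (n : ℤ) ∣ x - a := by
  have hn' : (n : ℚ) ≠ 0 := by exact_mod_cast hn.ne'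
  have hexp : -(m * a) / n + x • (m / n : ℚ) = ((m * (x - a) : ℤ) : ℚ) / n := by
    rw [zsmul_eq_mul]; push_cast; ring
  rw [← AddChar.map_zsmul_eq_zpow, ← AddChar.map_add_eq_mul, hexp, ratFourierChar_eq_one_iff]
  constructor
  · rintro ⟨z, hz⟩
    rw [div_eq_iff hn'] at hz
    exact hmn.symm.dvd_of_dvd_mul_left ⟨z, by rw [mul_comm (n : ℤ)]; exact_mod_cast hz⟩
  · rintro ⟨c, hc⟩
    exact ⟨m * c, by rw [hc]; push_cast; field_simp⟩

theorem stmt_4 (k : ℕ) (a : Fin k → ℤ) (n : Fin k → ℕ) (hn : ∀ s, 0 < n s)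
    (m : Fin k → ℤ) (hcop : ∀ s, IsCoprime (m s) (n s : ℤ))
    (S : Finset ℚ)
    (hS : S = Finset.univ.powerset.image
      (fun I : Finset (Fin k) => Int.fract (∑ s ∈ I, (m s : ℚ) / n s)))
    (x0 : ℤ)
    (hcons : ∀ j : ℕ, j < S.card → ∃ s : Fin k, (n s : ℤ) ∣ (x0 + j) - a s) :
    ∀ x : ℤ, ∃ s : Fin k, (n s : ℤ) ∣ x - a s := by
  set u : Fin k → ℂ := fun s => ratFourierChar (m s / n s)
  set β : Fin k → ℂ := fun s => ratFourierChar (-(m s * a s) / n s)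
  have covered_iff (x : ℤ) : (∃ s, (n s : ℤ) ∣ x - a s) ↔ ∏ s, (1 - β s * u s ^ x) = 0 := by
    simp only [prod_eq_zero_iff, mem_univ, true_and, sub_eq_zero, eq_comm (a := (1 : ℂ))]
    exact exists_congr fun s => (ratFourierChar_mul_zpow_eq_one_iff (hcop s) (hn s) _ _).symm
  have frequencies : #(univ.powerset.image fun I => ∏ s ∈ I, u s) ≤ #S := by
    have hprod (I : Finset (Fin k)) :
        ∏ s ∈ I, u s = ratFourierChar (Int.fract (∑ s ∈ I, (m s : ℚ) / n s)) := by
      rw [ratFourierChar_fract, AddChar.map_sum_eq_prod]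
    calc #(univ.powerset.image fun I => ∏ s ∈ I, u s) = #(S.image ratFourierChar) := by
          rw [hS, image_image]; exact congrArg card (image_congr fun I _ => hprod I)
      _ ≤ #S := card_image_le
  intro x
  rw [covered_iff, prod_one_sub_mul_zpow]
  refine sum_mul_zpow_eq_zero_of_consecutive
    (fun I _ => prod_ne_zero_iff.mpr fun s _ => ratFourierChar_ne_zero _) frequencies x0
    (fun j hj => ?_) x
  rw [← prod_one_sub_mul_zpow, ← covered_iff]
  exact_mod_cast hcons j hj
end

section
/- Erdős' covering conjecture: if a system of k residue classes {a_s + n_s ℤ}_{s=1}^k covers all integers from 1 to 2^k, then it covers every integer. -/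
open Finset Polynomial Complex

lemma geom_vanish {ι : Type*} [Fintype ι] (w : ι → ℂ) (C : ι → ℂ)
    (hw : ∀ i, w i ≠ 0)
    (hvan : ∀ j : ℕ, j < (Finset.univ.image w).card →
      ∑ i, C i * w i ^ (1 + j : ℤ) = 0) :
    ∀ x : ℤ, ∑ i, C i * w i ^ x = 0 := by
  classical
  set T := Finset.univ.image w with hT
  set d : ℂ → ℂ := fun u => ∑ i ∈ Finset.univ.filter (fun i => w i = u), C i with hd
  have hrepr : ∀ x : ℤ, ∑ i, C i * w i ^ x = ∑ u ∈ T, d u * u ^ x := by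
    intro x
    rw [← Finset.sum_fiberwise_of_maps_to (g := w)
      (fun i _ => Finset.mem_image_of_mem w (mem_univ i))]
    refine Finset.sum_congr rfl fun u hu => ?_
    rw [hd, Finset.sum_mul]
    exact Finset.sum_congr rfl fun i hi => by rw [(Finset.mem_filter.mp hi).2]
  set m := T.card with hm
  have hTne : ∀ u ∈ T, u ≠ 0 := by
    intro u hu
    obtain ⟨i, _, rfl⟩ := Finset.mem_image.mp hu
    exact hw i
  have hdz : ∀ u₀ ∈ T, d u₀ = 0 := by
    intro u₀ hu₀
    set L : Polynomial ℂ := ∏ u ∈ T.erase u₀, (X - Polynomial.C u) with hL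
    have hdegL : L.natDegree < m := by
      rw [hL, Polynomial.natDegree_prod _ _ (fun u _ => X_sub_C_ne_zero u)]
      simp only [natDegree_X_sub_C, Finset.sum_const, smul_eq_mul, mul_one]
      exact Finset.card_erase_lt_of_mem hu₀
    have key : ∑ j ∈ Finset.range m, L.coeff j * (∑ u ∈ T, d u * u ^ (1 + j : ℤ)) = 0 := by
      refine Finset.sum_eq_zero fun j hj => ?_
      rw [← hrepr, hvan j (Finset.mem_range.mp hj)]
      ring
    have key2 : ∑ u ∈ T, d u * u * L.eval u = 0 := by
      rw [← key]
      rw [Finset.sum_congr rfl (g := fun j => ∑ u ∈ T, L.coeff j * (d u * u ^ (1 + j : ℤ)))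
        (fun j _ => Finset.mul_sum _ _ _), Finset.sum_comm]
      refine Finset.sum_congr rfl fun u hu => ?_
      rw [Polynomial.eval_eq_sum_range' hdegL, Finset.mul_sum]
      refine Finset.sum_congr rfl fun j _ => ?_
      have hu0 : u ≠ 0 := hTne u hu
      rw [zpow_add₀ hu0, zpow_one, zpow_natCast]
      ring
    rw [Finset.sum_eq_single u₀ (fun u hu hne => ?_) (fun h => absurd hu₀ h)] at key2
    · have h1 : L.eval u₀ ≠ 0 := by
        rw [hL, Polynomial.eval_prod]
        refine Finset.prod_ne_zero_iff.mpr fun u hu => ?_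
        simp only [eval_sub, eval_X, eval_C, sub_ne_zero]
        exact fun h => (Finset.mem_erase.mp hu).1 h.symm
      have h2 := hTne u₀ hu₀
      rcases mul_eq_zero.mp key2 with h | h
      · rcases mul_eq_zero.mp h with h | h
        · exact h
        · exact absurd h h2
      · exact absurd h h1
    · have : L.eval u = 0 := by
        rw [hL, Polynomial.eval_prod]
        exact Finset.prod_eq_zero (Finset.mem_erase.mpr ⟨hne, hu⟩) (by simp)
      rw [this, mul_zero]
  intro x
  rw [hrepr]
  exact Finset.sum_eq_zero fun u hu => by rw [hdz u hu, zero_mul]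

theorem stmt_5 (k : ℕ) (a : Fin k → ℤ) (n : Fin k → ℕ) (hn : ∀ s, 0 < n s)
    (hcov : ∀ x : ℤ, 1 ≤ x → x ≤ 2 ^ k → ∃ s : Fin k, (n s : ℤ) ∣ x - a s) :
    ∀ x : ℤ, ∃ s : Fin k, (n s : ℤ) ∣ x - a s := by
  classical
  set ζ : Fin k → ℂ := fun s => Complex.exp (2 * Real.pi * Complex.I / (n s)) with hζ
  have hprim : ∀ s, IsPrimitiveRoot (ζ s) (n s) := fun s =>
    Complex.isPrimitiveRoot_exp _ (hn s).ne'
  have hζ0 : ∀ s, ζ s ≠ 0 := fun s => Complex.exp_ne_zero _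
  set g : ℤ → ℂ := fun x => ∏ s, (1 - ζ s ^ (x - a s)) with hg
  have hgz : ∀ x : ℤ, g x = 0 ↔ ∃ s : Fin k, (n s : ℤ) ∣ x - a s := by
    intro x
    rw [hg, Finset.prod_eq_zero_iff]
    simp only [Finset.mem_univ, true_and]
    refine exists_congr fun s => ?_
    rw [sub_eq_zero, eq_comm, (hprim s).zpow_eq_one_iff_dvd]
  set w : Finset (Fin k) → ℂ := fun t => ∏ s ∈ t, ζ s with hw
  set Co : Finset (Fin k) → ℂ :=
    fun t => (-1) ^ t.card * ∏ s ∈ t, ζ s ^ (-a s) with hCo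
  have hexp : ∀ x : ℤ, g x = ∑ t : Finset (Fin k), Co t * w t ^ x := by
    intro x
    rw [hg]
    have h1 : ∀ s : Fin k, (1 : ℂ) - ζ s ^ (x - a s) = -(ζ s ^ (x - a s)) + 1 := by
      intro s; ring
    simp only [h1]
    rw [Finset.prod_add, ← Finset.powerset_univ]
    refine Finset.sum_congr rfl fun t _ => ?_
    rw [Finset.prod_const_one, mul_one]
    rw [Finset.prod_congr rfl (fun i (_ : i ∈ t) => (by ring :
      -ζ i ^ (x - a i) = (-1 : ℂ) * ζ i ^ (x - a i)))]
    rw [Finset.prod_mul_distrib, Finset.prod_const]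
    have h2 : ∀ s ∈ t, ζ s ^ (x - a s) = ζ s ^ x * ζ s ^ (-a s) := by
      intro s _
      rw [sub_eq_add_neg, zpow_add₀ (hζ0 s)]
    rw [Finset.prod_congr rfl h2, Finset.prod_mul_distrib, Finset.prod_zpow]
    rw [hCo, hw]
    ring
  have hw0 : ∀ t, w t ≠ 0 := fun t => Finset.prod_ne_zero_iff.mpr fun s _ => hζ0 s
  have hmain := geom_vanish w Co hw0 ?_
  · intro x
    rw [← hgz x, hexp x]
    exact hmain x
  · intro j hj
    have hcard : (Finset.univ.image w).card ≤ 2 ^ k := by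
      calc (Finset.univ.image w).card ≤ (Finset.univ : Finset (Finset (Fin k))).card :=
            Finset.card_image_le
        _ = 2 ^ k := by simp [Fintype.card_finset]
    have h1 : (1 : ℤ) ≤ 1 + j := by omega
    have h2 : (1 + j : ℤ) ≤ 2 ^ k := by
      have : (j : ℤ) < 2 ^ k := by exact_mod_cast lt_of_lt_of_le hj hcard
      omega
    have := (hgz (1 + j)).mpr (hcov _ h1 (by exact_mod_cast h2))
    rw [hexp] at this
    exact this
end

section
/- Erdős–Heilbronn conjecture (da Silva–Hamidoune theorem): if p is a prime and A is a nonempty subset of ℤ/pℤ, then the restricted sumset 2^∧A = {a + b : a, b ∈ A, a ≠ b} satisfies |2^∧A| ≥ min{p, 2|A| − 3}. -/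
/-!
Polynomial method of Alon, Nathanson and Ruzsa. Let `k = |A|` and suppose `C = 2^∧A` had
`m < min p (2k - 3)` elements; trivially `m ≥ k - 1`. The polynomial
`f(x, y) = (x - y) ∏_{c ∈ C} (x + y - c)` vanishes on `A × A` and has total degree `m + 1`. Its
coefficient of `x^(k-1) y^(m+2-k)` is that of `(x - y)(x + y)^m`, namely
`C(m, k-2) - C(m, k-1)`, which is nonzero in characteristic `p` because `m < p` and `m ≠ 2k - 3`.
Both exponents are below `k`, so the Combinatorial Nullstellensatz gives a point of `A × A` where
`f` does not vanish.
-/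

open MvPolynomial Finset

namespace Finsupp

lemma single_add_single_eq_iff_of_ne {σ M : Type*} [AddZeroClass M] {i j : σ} (hij : i ≠ j)
    {a b a' b' : M} :
    single i a + single j b = single i a' + single j b' ↔ a = a' ∧ b = b' := by
  classical
  refine ⟨fun h => ⟨?_, ?_⟩, fun ⟨rfl, rfl⟩ => rfl⟩
  · simpa [hij] using DFunLike.congr_fun h i
  · simpa [hij, hij.symm] using DFunLike.congr_fun h j

end Finsupp

def restrictedSumset {α : Type*} [DecidableEq α] [Add α] (A : Finset α) : Finset α :=
  ((A ×ˢ A).filter fun x => x.1 ≠ x.2).image fun x => x.1 + x.2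

section restrictedSumset
variable {α : Type*} [DecidableEq α] [Add α]

lemma add_mem_restrictedSumset {A : Finset α} {a b : α} (ha : a ∈ A) (hb : b ∈ A)
    (hab : a ≠ b) : a + b ∈ restrictedSumset A :=
  mem_image.2 ⟨(a, b), mem_filter.2 ⟨mem_product.2 ⟨ha, hb⟩, hab⟩, rfl⟩

lemma card_sub_one_le_card_restrictedSumset [IsLeftCancelAdd α] (A : Finset α) :
    #A - 1 ≤ #(restrictedSumset A) := by
  obtain rfl | ⟨a, ha⟩ := A.eq_empty_or_nonempty
  · simp
  calc #A - 1 = #((A.erase a).image (a + ·)) := by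
        rw [card_image_of_injective _ (add_right_injective a), card_erase_of_mem ha]
    _ ≤ #(restrictedSumset A) := card_le_card fun x hx => by
        obtain ⟨b, hb, rfl⟩ := mem_image.1 hx
        exact add_mem_restrictedSumset ha (mem_of_mem_erase hb) (ne_of_mem_erase hb).symm

end restrictedSumset

namespace MvPolynomial

variable {σ R : Type*} [CommRing R]

lemma totalDegree_X_le (i : σ) : (X i : MvPolynomial σ R).totalDegree ≤ 1 :=
  (totalDegree_monomial_le _ _).trans (by simp)

lemma totalDegree_X_add_X_le (i j : σ) : (X i + X j : MvPolynomial σ R).totalDegree ≤ 1 :=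
  (totalDegree_add _ _).trans (max_le (totalDegree_X_le i) (totalDegree_X_le j))

lemma totalDegree_X_sub_X_le (i j : σ) : (X i - X j : MvPolynomial σ R).totalDegree ≤ 1 :=
  (totalDegree_sub _ _).trans (max_le (totalDegree_X_le i) (totalDegree_X_le j))

lemma coeff_eq_of_totalDegree_sub_lt {P Q : MvPolynomial σ R} {d : σ →₀ ℕ}
    (h : (P - Q).totalDegree < d.degree) : P.coeff d = Q.coeff d :=
  sub_eq_zero.1 (by rw [← coeff_sub]; exact coeff_eq_zero_of_totalDegree_lt h)

lemma totalDegree_prod_sub_C_le {L : MvPolynomial σ R} (hL : L.totalDegree ≤ 1) (S : Finset R) :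
    (∏ c ∈ S, (L - C c)).totalDegree ≤ #S := by
  refine (totalDegree_finsetProd S _).trans ?_
  simpa using sum_le_sum fun c (_ : c ∈ S) => (totalDegree_sub_C_le L c).trans hL

lemma totalDegree_prod_sub_C_sub_pow_lt {L : MvPolynomial σ R} (hL : L.totalDegree ≤ 1)
    {S : Finset R} (hS : S.Nonempty) :
    (∏ c ∈ S, (L - C c) - L ^ #S).totalDegree < #S := by
  classical
  induction hS using Finset.Nonempty.cons_induction with
  | singleton a => simp
  | cons a S ha _ ih =>
    set P := ∏ c ∈ S, (L - C c)
    have hP : P.totalDegree ≤ #S := totalDegree_prod_sub_C_le hL S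
    have hsplit : (L - C a) * P - L ^ (#S + 1) = L * (P - L ^ #S) - C a * P := by ring
    rw [prod_cons, card_cons, hsplit]
    refine (totalDegree_sub _ _).trans_lt (max_lt ?_ ?_)
    · calc (L * (P - L ^ #S)).totalDegree ≤ L.totalDegree + (P - L ^ #S).totalDegree :=
            totalDegree_mul _ _
        _ < #S + 1 := by omega
    · calc (C a * P).totalDegree ≤ (C a).totalDegree + P.totalDegree := totalDegree_mul _ _
        _ < #S + 1 := by rw [totalDegree_C]; omega

lemma coeff_X_add_X_pow {i j : σ} (hij : i ≠ j) (a b n : ℕ) :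
    coeff (Finsupp.single i a + Finsupp.single j b) ((X i + X j : MvPolynomial σ R) ^ n) =
      if a + b = n then (n.choose a : R) else 0 := by
  classical
  have hexp : (X i + X j : MvPolynomial σ R) ^ n = ∑ l ∈ range (n + 1),
      monomial (Finsupp.single i l + Finsupp.single j (n - l)) (n.choose l : R) := by
    rw [add_pow]
    refine sum_congr rfl fun l _ => ?_
    rw [X_pow_eq_monomial, X_pow_eq_monomial, monomial_mul, ← C_eq_coe_nat, mul_comm,
      C_mul_monomial]
    simp
  rw [hexp, coeff_sum]
  simp only [coeff_monomial, Finsupp.single_add_single_eq_iff_of_ne hij]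
  split_ifs with h
  · rw [sum_eq_single a] <;> grind
  · exact sum_eq_zero fun l hl => if_neg (by have := mem_range.1 hl; omega)

lemma coeff_X_sub_X_mul_X_add_X_pow {i j : σ} (hij : i ≠ j) {a b n : ℕ} (h : a + b + 1 = n) :
    coeff (Finsupp.single i (a + 1) + Finsupp.single j (b + 1))
        ((X i - X j) * (X i + X j : MvPolynomial σ R) ^ n) =
      (n.choose a : R) - n.choose (a + 1) := by
  have hi : Finsupp.single i (a + 1) + Finsupp.single j (b + 1) =
      Finsupp.single i 1 + (Finsupp.single i a + Finsupp.single j (b + 1)) := by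
    rw [Finsupp.single_add, add_comm (Finsupp.single i a), add_assoc]
  have hj : Finsupp.single i (a + 1) + Finsupp.single j (b + 1) =
      Finsupp.single j 1 + (Finsupp.single i (a + 1) + Finsupp.single j b) := by
    rw [Finsupp.single_add j b, add_comm (Finsupp.single j b), add_left_comm]
  rw [sub_mul, coeff_sub]
  nth_rw 1 [hi]
  rw [hj, coeff_X_mul, coeff_X_mul, coeff_X_add_X_pow hij, coeff_X_add_X_pow hij,
    if_pos (by omega), if_pos (by omega)]

end MvPolynomial

lemma CharP.natCast_choose_ne_choose_succ (F : Type*) [Field F] (p : ℕ) [Fact p.Prime]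
    [CharP F p] {n r : ℕ} (hrn : r < n) (hnp : n < p) (hn : n ≠ 2 * r + 1) :
    (n.choose r : F) ≠ n.choose (r + 1) := by
  intro heq
  have hfact : (n.factorial : F) ≠ 0 := by
    rw [Ne, CharP.cast_eq_zero_iff F p]
    exact fun h => absurd ((Fact.out : p.Prime).dvd_factorial.1 h) (by omega)
  have hchoose : (n.choose r : F) ≠ 0 := by
    rw [← Nat.choose_mul_factorial_mul_factorial hrn.le, Nat.cast_mul, Nat.cast_mul] at hfact
    exact left_ne_zero_of_mul (left_ne_zero_of_mul hfact)
  have hpascal : (n.choose (r + 1) : F) * (r + 1 : ℕ) = n.choose r * (n - r : ℕ) := by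
    exact_mod_cast congrArg (Nat.cast : ℕ → F) (Nat.choose_succ_right_eq n r)
  rw [← heq] at hpascal
  have := CharP.natCast_injOn_Iio F p (by simp; omega) (by simp; omega)
    (mul_left_cancel₀ hchoose hpascal)
  omega

section ErdosHeilbronn

variable {R : Type*} [CommRing R]

noncomputable def erdosHeilbronnPoly (S : Finset R) : MvPolynomial (Fin 2) R :=
  (X 0 - X 1) * ∏ c ∈ S, (X 0 + X 1 - C c)

lemma totalDegree_erdosHeilbronnPoly_le (S : Finset R) :
    (erdosHeilbronnPoly S).totalDegree ≤ #S + 1 := by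
  have := totalDegree_prod_sub_C_le (totalDegree_X_add_X_le (σ := Fin 2) (R := R) 0 1) S
  have := totalDegree_X_sub_X_le (σ := Fin 2) (R := R) 0 1
  grw [erdosHeilbronnPoly, totalDegree_mul]
  omega

lemma coeff_erdosHeilbronnPoly {S : Finset R} {a b : ℕ} (h : a + b + 1 = #S) :
    (erdosHeilbronnPoly S).coeff (Finsupp.single 0 (a + 1) + Finsupp.single 1 (b + 1)) =
      ((#S).choose a : R) - (#S).choose (a + 1) := by
  rw [erdosHeilbronnPoly, coeff_eq_of_totalDegree_sub_lt (Q := (X 0 - X 1) * (X 0 + X 1) ^ #S),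
    coeff_X_sub_X_mul_X_add_X_pow (by decide) h]
  have := totalDegree_prod_sub_C_sub_pow_lt (totalDegree_X_add_X_le (σ := Fin 2) (R := R) 0 1)
    (S := S) (card_pos.1 (by omega))
  have := totalDegree_X_sub_X_le (σ := Fin 2) (R := R) 0 1
  grw [← mul_sub, totalDegree_mul]
  simp only [map_add, Finsupp.degree_single]
  omega

lemma eval_erdosHeilbronnPoly_restrictedSumset [DecidableEq R] (A : Finset R) {x : Fin 2 → R}
    (hx : ∀ i, x i ∈ A) : eval x (erdosHeilbronnPoly (restrictedSumset A)) = 0 := by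
  simp only [erdosHeilbronnPoly, eval_mul, eval_sub, eval_X, eval_prod, eval_add, eval_C]
  obtain hx01 | hx01 := eq_or_ne (x 0) (x 1)
  · rw [hx01, sub_self, zero_mul]
  · rw [prod_eq_zero (add_mem_restrictedSumset (hx 0) (hx 1) hx01) (sub_self _), mul_zero]

end ErdosHeilbronn

theorem min_le_card_restrictedSumset {F : Type*} [Field F] [DecidableEq F] (p : ℕ) [Fact p.Prime]
    [CharP F p] (A : Finset F) : min p (2 * #A - 3) ≤ #(restrictedSumset A) := by
  by_contra! hlt
  have hkm := card_sub_one_le_card_restrictedSumset A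
  obtain ⟨r, hr⟩ : ∃ r, #A = r + 2 := ⟨#A - 2, by omega⟩
  obtain ⟨b, hb⟩ : ∃ b, r + b + 1 = #(restrictedSumset A) :=
    ⟨#(restrictedSumset A) - r - 1, by omega⟩
  set t : Fin 2 →₀ ℕ := Finsupp.single 0 (r + 1) + Finsupp.single 1 (b + 1)
  have htdeg : t.degree = #(restrictedSumset A) + 1 := by simp [t]; omega
  have hcoeff : (erdosHeilbronnPoly (restrictedSumset A)).coeff t ≠ 0 := by
    rw [coeff_erdosHeilbronnPoly hb, sub_ne_zero]
    exact CharP.natCast_choose_ne_choose_succ F p (by omega) (by omega) (by omega)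
  have hdeg : (erdosHeilbronnPoly (restrictedSumset A)).totalDegree = t.degree := by
    have : t.degree ≤ _ := le_totalDegree (mem_support_iff.2 hcoeff)
    have := totalDegree_erdosHeilbronnPoly_le (restrictedSumset A)
    omega
  obtain ⟨x, hxA, hx⟩ := combinatorial_nullstellensatz_exists_eval_nonzero _ _ hcoeff hdeg
    (fun _ => A) (by intro i; fin_cases i <;> simp [t] <;> omega)
  exact hx (eval_erdosHeilbronnPoly_restrictedSumset A hxA)

theorem stmt_7_general (p : ℕ) (hp : p.Prime) (A : Finset (ZMod p)) :
    min (p : ℤ) (2 * A.card - 3) ≤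
      ((((A ×ˢ A).filter fun x => x.1 ≠ x.2).image fun x => x.1 + x.2).card : ℤ) := by
  have : Fact p.Prime := ⟨hp⟩
  have := min_le_card_restrictedSumset p A
  unfold restrictedSumset at this
  omega

theorem stmt_7 (p : ℕ) (hp : p.Prime) (A : Finset (ZMod p)) (hA : A.Nonempty) :
    min (p : ℤ) (2 * A.card - 3) ≤
      ((((A ×ˢ A).filter fun x => x.1 ≠ x.2).image fun x => x.1 + x.2).card : ℤ) :=
  stmt_7_general p hp A
end

section
/- Dasgupta–Károlyi–Serra–Szegedy theorem: let G be a finite cyclic group of odd order and A, B ⊆ G with |A| = |B| = n > 0. Then there exist enumerations a_1,…,a_n of A and b_1,…,b_n of B such that the sums a_1 + b_1, …, a_n + b_n are pairwise distinct. -/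
open Finset

/-- In a field of characteristic two, the determinant is a plain sum over permutations. -/
lemma dkss_det_char2 {F : Type*} [Field F] [CharP F 2] {n : ℕ}
    (M : Matrix (Fin n) (Fin n) F) :
    M.det = ∑ σ : Equiv.Perm (Fin n), ∏ i, M (σ i) i := by
  rw [Matrix.det_apply]
  refine Finset.sum_congr rfl fun σ _ => ?_
  rcases Int.units_eq_one_or (Equiv.Perm.sign σ) with h | h <;>
    simp [h, CharTwo.neg_eq]

/-- Core DKSS argument over a field of characteristic two. -/
lemma dkss_core {F : Type*} [Field F] [CharP F 2] {n : ℕ} (a b : Fin n → F)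
    (ha : Function.Injective a) (hb : Function.Injective b) :
    ∃ σ : Equiv.Perm (Fin n), Function.Injective (fun i => a (σ i) * b i) := by
  by_contra hcon
  push_neg at hcon
  have hzero : ∀ σ : Equiv.Perm (Fin n),
      (Matrix.vandermonde (fun i => a (σ i) * b i)).det = 0 := by
    intro σ
    obtain ⟨i, j, hij, hne⟩ := Function.not_injective_iff.mp (hcon σ)
    rw [Matrix.det_vandermonde]
    rcases lt_or_gt_of_ne hne with h | h
    · exact Finset.prod_eq_zero (Finset.mem_univ i)
        (Finset.prod_eq_zero (Finset.mem_Ioi.mpr h) (by rw [hij, sub_self]))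
    · exact Finset.prod_eq_zero (Finset.mem_univ j)
        (Finset.prod_eq_zero (Finset.mem_Ioi.mpr h) (by rw [← hij, sub_self]))
  have key : ∑ σ : Equiv.Perm (Fin n),
      (Matrix.vandermonde (fun i => a (σ i) * b i)).det
      = (Matrix.vandermonde a).det * (Matrix.vandermonde b).det := by
    simp_rw [dkss_det_char2, Matrix.vandermonde_apply, mul_pow,
      Finset.prod_mul_distrib]
    rw [Finset.sum_comm]
    have step : ∀ τ : Equiv.Perm (Fin n),
        ∑ σ : Equiv.Perm (Fin n), (∏ i, a (σ (τ i)) ^ (i : ℕ)) * ∏ i, b (τ i) ^ (i : ℕ)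
        = (∑ ρ : Equiv.Perm (Fin n), ∏ i, a (ρ i) ^ (i : ℕ)) * ∏ i, b (τ i) ^ (i : ℕ) := by
      intro τ
      rw [← Finset.sum_mul]
      congr 1
      rw [← Equiv.sum_comp (Equiv.mulRight τ)
        (fun ρ : Equiv.Perm (Fin n) => ∏ i, a (ρ i) ^ (i : ℕ))]
      refine Finset.sum_congr rfl fun σ _ => ?_
      simp [Equiv.Perm.mul_apply]
    rw [Finset.sum_congr rfl fun τ _ => step τ, ← Finset.mul_sum]
  have hva : (Matrix.vandermonde a).det ≠ 0 := by
    rw [Matrix.det_vandermonde]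
    refine Finset.prod_ne_zero_iff.mpr fun i _ => Finset.prod_ne_zero_iff.mpr
      fun j hj => sub_ne_zero.mpr fun h => ?_
    exact absurd (ha h) (Finset.mem_Ioi.mp hj).ne'
  have hvb : (Matrix.vandermonde b).det ≠ 0 := by
    rw [Matrix.det_vandermonde]
    refine Finset.prod_ne_zero_iff.mpr fun i _ => Finset.prod_ne_zero_iff.mpr
      fun j hj => sub_ne_zero.mpr fun h => ?_
    exact absurd (hb h) (Finset.mem_Ioi.mp hj).ne'
  rw [Finset.sum_eq_zero fun σ _ => hzero σ] at key
  exact mul_ne_zero hva hvb key.symm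

/-- A finite cyclic group of odd order embeds multiplicatively
into a field of characteristic two. -/
lemma dkss_embed (G : Type*) [AddCommGroup G] [Fintype G] [IsAddCyclic G]
    (hodd : Odd (Fintype.card G)) :
    ∃ (F : Type) (_ : Field F) (_ : CharP F 2) (ψ : G → F),
      Function.Injective ψ ∧ ∀ x y : G, ψ (x + y) = ψ x * ψ y := by
  classical
  set m := Nat.card G with hm
  have hm0 : 0 < m := Nat.card_pos
  have hoddm : Odd m := by rwa [hm, Nat.card_eq_fintype_card]
  set k := Nat.totient m with hk
  have hk0 : k ≠ 0 := (Nat.totient_pos.mpr hm0).ne'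
  have hcop : Nat.Coprime 2 m :=
    (Nat.prime_two.coprime_iff_not_dvd).mpr
      (by have := Nat.odd_iff.mp hoddm; omega)
  have hdvd : m ∣ 2 ^ k - 1 :=
    (Nat.modEq_iff_dvd' Nat.one_le_two_pow).mp (Nat.ModEq.pow_totient hcop).symm
  haveI : Fact (Nat.Prime 2) := ⟨Nat.prime_two⟩
  let F := GaloisField 2 k
  haveI : Fintype F := Fintype.ofFinite F
  have hcardF : Fintype.card F = 2 ^ k := by
    rw [← Nat.card_eq_fintype_card]; exact GaloisField.card 2 k hk0
  have hcardU : Nat.card Fˣ = 2 ^ k - 1 := by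
    rw [Nat.card_units, GaloisField.card 2 k hk0]
  obtain ⟨u, hu⟩ := IsCyclic.exists_generator (α := Fˣ)
  have hou : orderOf u = 2 ^ k - 1 := by
    rw [orderOf_eq_card_of_forall_mem_zpowers hu, hcardU]
  obtain ⟨t, ht⟩ := hdvd
  have ht0 : 0 < t := by
    have h2 : 1 < 2 ^ k := Nat.one_lt_two_pow_iff.mpr hk0
    rcases Nat.eq_zero_or_pos t with rfl | h
    · rw [Nat.mul_zero] at ht
      exact absurd (Nat.le_of_sub_eq_zero ht) h2.not_ge
    · exact h
  set v : Fˣ := u ^ t with hv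
  have hov : orderOf v = m := by
    rw [hv, orderOf_pow, hou, ht,
      Nat.gcd_eq_right (dvd_mul_left t m), Nat.mul_div_cancel _ ht0]
  have hvm : v ^ m = 1 := by rw [← hov, pow_orderOf_eq_one]
  haveI : NeZero m := ⟨hm0.ne'⟩
  let f : ℤ →+ Additive Fˣ := zmultiplesHom (Additive Fˣ) (Additive.ofMul v)
  have hf : f (m : ℤ) = 0 := by
    show (m : ℤ) • Additive.ofMul v = 0
    rw [← ofMul_zpow]
    simp [zpow_natCast, hvm]
  let φ : ZMod m →+ Additive Fˣ := ZMod.lift m ⟨f, hf⟩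
  have hφcoe : ∀ j : ℕ, φ ((j : ℤ) : ZMod m) = Additive.ofMul (v ^ j) := by
    intro j
    rw [show φ ((j : ℤ) : ZMod m) = f (j : ℤ) from ZMod.lift_coe m ⟨f, hf⟩ (j : ℤ)]
    show (j : ℤ) • Additive.ofMul v = _
    rw [← ofMul_zpow, zpow_natCast]
  have hφinj : Function.Injective φ := by
    rw [injective_iff_map_eq_zero]
    intro x hx
    have hrep : ((x.val : ℤ) : ZMod m) = x := by
      push_cast
      exact ZMod.natCast_rightInverse x
    rw [← hrep, hφcoe x.val] at hx
    have hpow : v ^ x.val = 1 := by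
      have := congrArg Additive.toMul hx
      simpa using this
    have hdvd2 : m ∣ x.val := by
      have hh : orderOf v ∣ x.val := orderOf_dvd_of_pow_eq_one hpow
      rwa [hov] at hh
    have hval : x.val = 0 := Nat.eq_zero_of_dvd_of_lt hdvd2 (ZMod.val_lt x)
    rw [← hrep, hval]
    simp
  -- assemble ψ
  obtain ⟨e⟩ : Nonempty (ZMod m ≃+ G) :=
    ⟨zmodAddCyclicAddEquiv (inferInstance : IsAddCyclic G)⟩
  refine ⟨F, inferInstance, inferInstance,
    fun x => ((Additive.toMul (φ (e.symm x)) : Fˣ) : F), ?_, ?_⟩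
  · intro x y hxy
    have : φ (e.symm x) = φ (e.symm y) := by
      have := Units.ext hxy
      exact Additive.toMul.injective this
    exact e.symm.injective (hφinj this)
  · intro x y
    show ((Additive.toMul (φ (e.symm (x + y))) : Fˣ) : F) = _
    rw [map_add, map_add, toMul_add, Units.val_mul]

theorem stmt_9 (G : Type*) [AddCommGroup G] [Fintype G] [IsAddCyclic G]
    (hodd : Odd (Fintype.card G)) (n : ℕ) (hn : 0 < n)
    (A B : Finset G) (hA : A.card = n) (hB : B.card = n) :
    ∃ a b : Fin n → G,
      Function.Injective a ∧ (∀ i, a i ∈ A) ∧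
      Function.Injective b ∧ (∀ i, b i ∈ B) ∧
      Function.Injective (fun i => a i + b i) := by
  classical
  obtain ⟨F, _, _, ψ, hψinj, hψmul⟩ := dkss_embed G hodd
  let ea : Fin n → G := fun i => ((Finset.equivFinOfCardEq hA).symm i : G)
  let eb : Fin n → G := fun i => ((Finset.equivFinOfCardEq hB).symm i : G)
  have hea : Function.Injective ea :=
    Subtype.coe_injective.comp (Finset.equivFinOfCardEq hA).symm.injective
  have heb : Function.Injective eb :=
    Subtype.coe_injective.comp (Finset.equivFinOfCardEq hB).symm.injective
  obtain ⟨σ, hσ⟩ := dkss_core (ψ ∘ ea) (ψ ∘ eb)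
    (hψinj.comp hea) (hψinj.comp heb)
  refine ⟨fun i => ea (σ i), eb, hea.comp σ.injective,
    fun i => ((Finset.equivFinOfCardEq hA).symm (σ i)).2, heb,
    fun i => ((Finset.equivFinOfCardEq hB).symm i).2, ?_⟩
  intro i j hij
  apply hσ
  show ψ (ea (σ i)) * ψ (eb i) = ψ (ea (σ j)) * ψ (eb j)
  rw [← hψmul, ← hψmul]
  exact congrArg ψ hij
end

section
/- Erdős–Ginzburg–Ziv theorem (abelian version): let G be an additive abelian group of order n and c_1,…,c_{2n−1} ∈ G. Then there exists a subset I ⊆ {1,…,2n−1} with |I| = n and ∑_{s∈I} c_s = 0. -/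
/-!
Cyclic groups are covered by the Erdős–Ginzburg–Ziv theorem for `ZMod n`. The property is
stable under extensions: if it holds for `H` (of order `m`) and for `G ⧸ H` (of order `k`), then
from `2mk - 1` elements one greedily extracts `2m - 1` disjoint blocks of size `k` whose sums lie
in `H`, applying the property of `G ⧸ H` to the at least `2k - 1` elements left each time, and
the property of `H` picks `m` of these blocks with total sum zero. A non-cyclic group has a
nontrivial cyclic subgroup, so induction on the order finishes the proof.
-/

open Finset Function

section

variable {G : Type*} [AddCommGroup G]

def ErdosGinzburgZivProperty (G : Type*) [AddCommGroup G] : Prop :=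
  ∀ {ι : Type} (c : ι → G) (s : Finset ι),
    2 * Nat.card G - 1 ≤ #s → ∃ t ⊆ s, #t = Nat.card G ∧ ∑ i ∈ t, c i = 0

theorem IsAddCyclic.erdosGinzburgZivProperty [IsAddCyclic G] :
    ErdosGinzburgZivProperty G := by
  intro ι c s hs
  let e : ZMod (Nat.card G) ≃+ G := zmodAddCyclicAddEquiv ‹_›
  obtain ⟨t, hts, hcard, hsum⟩ := ZMod.erdos_ginzburg_ziv (fun i ↦ e.symm (c i)) hs
  refine ⟨t, hts, hcard, ?_⟩
  simpa [← map_sum] using congrArg e hsum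

theorem exists_disjoint_blocks_sum_mem {H : AddSubgroup G}
    (hQ : ErdosGinzburgZivProperty (G ⧸ H)) {ι : Type} [DecidableEq ι] (c : ι → G) :
    ∀ (j : ℕ) (s : Finset ι), (j + 1) * Nat.card (G ⧸ H) - 1 ≤ #s →
      ∃ f : Fin j → Finset ι, Pairwise (Disjoint on f) ∧
        ∀ i, f i ⊆ s ∧ #(f i) = Nat.card (G ⧸ H) ∧ ∑ x ∈ f i, c x ∈ H := by
  intro j
  induction j with
  | zero => exact fun _ _ ↦ ⟨Fin.elim0, fun i ↦ i.elim0, fun i ↦ i.elim0⟩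
  | succ j ih =>
    intro s hs
    have hk₁ := add_one_mul j (Nat.card (G ⧸ H))
    have hk₂ := add_one_mul (j + 1) (Nat.card (G ⧸ H))
    obtain ⟨t, hts, htk, htsum⟩ := hQ (fun x ↦ (c x : G ⧸ H)) s (by omega)
    have htH : ∑ x ∈ t, c x ∈ H := by
      rwa [← QuotientAddGroup.eq_zero_iff, QuotientAddGroup.mk_sum]
    obtain ⟨f, hdisj, hf⟩ := ih (s \ t) (by rw [card_sdiff_of_subset hts]; omega)
    refine ⟨Fin.cons t f, ?_, fun i ↦ ?_⟩
    · have htf : ∀ i, Disjoint t (f i) := fun i ↦ disjoint_sdiff.mono_right (hf i).1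
      intro a b hab
      cases a using Fin.cases <;> cases b using Fin.cases
      · exact absurd rfl hab
      · exact htf _
      · exact (htf _).symm
      · exact hdisj (fun h ↦ hab (congrArg Fin.succ h))
    · cases i using Fin.cases
      · exact ⟨hts, htk, htH⟩
      · obtain ⟨hfs, hfk, hfH⟩ := hf _
        exact ⟨hfs.trans sdiff_subset, hfk, hfH⟩

theorem ErdosGinzburgZivProperty.of_quotient {H : AddSubgroup G} [Finite H]
    (hH : ErdosGinzburgZivProperty H) (hQ : ErdosGinzburgZivProperty (G ⧸ H)) :
    ErdosGinzburgZivProperty G := by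
  classical
  intro ι c s hs
  set k := Nat.card (G ⧸ H)
  set m := Nat.card H
  have hcard : Nat.card G = k * m := H.card_eq_card_quotient_mul_card_addSubgroup
  have hm : 0 < m := Nat.card_pos
  have hblocks : (2 * m - 1 + 1) * k = 2 * (k * m) := by
    rw [Nat.sub_add_cancel (by omega)]; ring
  obtain ⟨f, hdisj, hf⟩ := exists_disjoint_blocks_sum_mem hQ c (2 * m - 1) s
    (by rw [hblocks, ← hcard]; exact hs)
  obtain ⟨T, -, hTm, hTsum⟩ := hH (fun i ↦ ⟨∑ x ∈ f i, c x, (hf i).2.2⟩)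
    (univ : Finset (Fin (2 * m - 1))) (by simp only [card_univ, Fintype.card_fin]; omega)
  have hdisjT : (T : Set (Fin (2 * m - 1))).PairwiseDisjoint f := hdisj.set_pairwise _
  refine ⟨T.biUnion f, biUnion_subset.2 fun i _ ↦ (hf i).1, ?_, ?_⟩
  · rw [card_biUnion hdisjT, sum_const_nat fun i _ ↦ (hf i).2.1, hTm, hcard, mul_comm]
  · rw [sum_biUnion hdisjT]
    simpa using congrArg ((↑) : H → G) hTsum

theorem erdosGinzburgZivProperty_of_finite [Finite G] : ErdosGinzburgZivProperty G := by
  induction h : Nat.card G using Nat.strong_induction_on generalizing G with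
  | _ n ih =>
  by_cases hcyc : IsAddCyclic G
  · exact hcyc.erdosGinzburgZivProperty
  have : Nontrivial G :=
    not_subsingleton_iff_nontrivial.mp fun _ ↦ hcyc isAddCyclic_of_subsingleton
  obtain ⟨g, hg⟩ := exists_ne (0 : G)
  let H := AddSubgroup.zmultiples g
  have hQ : Nat.card (G ⧸ H) < n := by
    have hH : 1 < Nat.card H := by
      rw [Nat.card_zmultiples]
      exact lt_of_le_of_ne (addOrderOf_pos g) (Ne.symm (by simpa using hg))
    have hG : n = Nat.card (G ⧸ H) * Nat.card H :=
      h ▸ H.card_eq_card_quotient_mul_card_addSubgroup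
    have hn : 0 < n := h ▸ Nat.card_pos
    nlinarith
  exact ErdosGinzburgZivProperty.of_quotient IsAddCyclic.erdosGinzburgZivProperty
    (ih _ hQ rfl)

end

theorem stmt_14 (G : Type*) [AddCommGroup G] [Fintype G] (n : ℕ)
    (hcard : Fintype.card G = n) (c : Fin (2 * n - 1) → G) :
    ∃ I : Finset (Fin (2 * n - 1)), I.card = n ∧ ∑ s ∈ I, c s = 0 := by
  subst hcard
  obtain ⟨I, -, hI⟩ := erdosGinzburgZivProperty_of_finite (G := G) c univ
    (by simp [Nat.card_eq_fintype_card])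
  exact ⟨I, by simpa [Nat.card_eq_fintype_card] using hI⟩
end

section
/- Tomkinson's theorem: if {a_i G_i}_{i=1}^k is a minimal cover of a group G by left cosets of subgroups G_1,…,G_k (i.e., the cosets cover G but no proper subsystem does), then [G : ⋂_{i=1}^k G_i] ≤ k!. -/
/-!
Let `D_S = ⋂_{j ∉ S} H_j`. By minimality there is, for `j ∈ S`, a point `x` lying in no coset
`a_i H_i` with `i ≠ j`, so the coset `x D_S` meets no coset with index outside `S` and is covered
by the `|S|` cosets with index in `S`. Intersecting with `x D_S` turns this into a cover of `D_S`
by `|S|` cosets of the subgroups `H_i ∩ D_S`, and B. H. Neumann's lemma yields some `i₀ ∈ S` with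
`[D_S : H_{i₀} ∩ D_S] ≤ |S|`. Since `H_{i₀} ∩ D_S = D_{S ∖ {i₀}}`, induction on `|S|` gives
`[D_S : ⋂ H_i] ≤ |S|!`, and `S` = all indices is the theorem.
-/

open Pointwise

namespace Subgroup

variable {G ι : Type*} [Group G] {a : ι → G} {H : ι → Subgroup G}

theorem exists_leftCoset_cover_subgroupOf {D : Subgroup G} {S : Finset ι}
    (h : (D : Set G) ⊆ ⋃ i ∈ S, a i • (H i : Set G)) :
    ∃ b : ι → D, ⋃ i ∈ S, b i • ((H i).subgroupOf D : Set D) = Set.univ := by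
  have hrep : ∀ i, ∃ b : D, ∀ d : D,
      (d : G) ∈ a i • (H i : Set G) → (b : G) ∈ a i • (H i : Set G) := by
    intro i
    by_cases hmeet : ∃ d : D, (d : G) ∈ a i • (H i : Set G)
    · obtain ⟨d, hd⟩ := hmeet
      exact ⟨d, fun _ _ => hd⟩
    · exact ⟨1, fun d hd => absurd ⟨d, hd⟩ hmeet⟩
  choose b hb using hrep
  refine ⟨b, Set.eq_univ_of_forall fun d => ?_⟩
  obtain ⟨i, hiS, hd⟩ := Set.mem_iUnion₂.mp (h d.2)
  refine Set.mem_iUnion₂.mpr ⟨i, hiS, ?_⟩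
  rw [mem_leftCoset_iff, SetLike.mem_coe, mem_subgroupOf]
  have hbd := (H i).mul_mem ((H i).inv_mem ((mem_leftCoset_iff _).mp (hb i d hd)))
    ((mem_leftCoset_iff _).mp hd)
  simpa [mul_assoc] using hbd

theorem exists_relIndex_le_card_of_smul_subset_leftCoset_cover {D : Subgroup G}
    {S : Finset ι} {x : G} (h : x • (D : Set G) ⊆ ⋃ i ∈ S, a i • (H i : Set G)) :
    ∃ i ∈ S, (H i).relIndex D ≠ 0 ∧ (H i).relIndex D ≤ S.card := by
  have hD : (D : Set G) ⊆ ⋃ i ∈ S, (x⁻¹ * a i) • (H i : Set G) := by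
    intro d hd
    obtain ⟨i, hiS, hxd⟩ := Set.mem_iUnion₂.mp (h (Set.smul_mem_smul_set hd))
    refine Set.mem_iUnion₂.mpr ⟨i, hiS, ?_⟩
    rw [mem_leftCoset_iff] at hxd ⊢
    simpa [mul_assoc] using hxd
  obtain ⟨b, hb⟩ := exists_leftCoset_cover_subgroupOf hD
  obtain ⟨i, hiS, hfin, hle⟩ := exists_index_le_card_of_leftCoset_cover hb
  exact ⟨i, hiS, hfin.index_ne_zero, hle⟩

theorem smul_iInf_notMem_subset_biUnion {S : Finset ι} {x : G}
    (hcover : ∀ y : G, ∃ i, y ∈ a i • (H i : Set G))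
    (hx : ∀ i ∉ S, x ∉ a i • (H i : Set G)) :
    x • ((⨅ (j) (_ : j ∉ S), H j : Subgroup G) : Set G) ⊆ ⋃ i ∈ S, a i • (H i : Set G) := by
  rintro _ ⟨d, hd, rfl⟩
  obtain ⟨i, hi⟩ := hcover (x • d)
  refine Set.mem_biUnion (by_contra fun hiS => hx i hiS ?_) hi
  have hdi : d ∈ H i := mem_iInf.mp (mem_iInf.mp hd i) hiS
  rw [mem_leftCoset_iff] at hi ⊢
  simpa [mul_assoc] using (H i).mul_mem hi ((H i).inv_mem hdi)

theorem iInf_notMem_erase [DecidableEq ι] (S : Finset ι) (i : ι) :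
    ⨅ (j) (_ : j ∉ S.erase i), H j = H i ⊓ ⨅ (j) (_ : j ∉ S), H j := by
  simp only [Finset.mem_erase, not_and_or, not_not, iInf_or, iInf_inf_eq,
    iInf_iInf_eq_left]

variable (hcover : ∀ x : G, ∃ i, x ∈ a i • (H i : Set G))
  (hmin : ∀ j, ∃ x : G, ∀ i, i ≠ j → x ∉ a i • (H i : Set G))
include hcover hmin

theorem exists_relIndex_iInf_notMem_le_card {S : Finset ι} (hS : S.Nonempty) :
    ∃ i ∈ S, (H i).relIndex (⨅ (j) (_ : j ∉ S), H j) ≠ 0 ∧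
      (H i).relIndex (⨅ (j) (_ : j ∉ S), H j) ≤ S.card := by
  obtain ⟨j, hj⟩ := hS
  obtain ⟨x, hx⟩ := hmin j
  exact exists_relIndex_le_card_of_smul_subset_leftCoset_cover <|
    smul_iInf_notMem_subset_biUnion hcover fun i hi => hx i (ne_of_mem_of_not_mem hj hi).symm

theorem relIndex_iInf_iInf_notMem_le_factorial (S : Finset ι) :
    (⨅ i, H i).relIndex (⨅ (j) (_ : j ∉ S), H j) ≠ 0 ∧
      (⨅ i, H i).relIndex (⨅ (j) (_ : j ∉ S), H j) ≤ S.card.factorial := by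
  classical
  induction S using Finset.strongInduction with
  | H S ih =>
  rcases S.eq_empty_or_nonempty with rfl | hS
  · simp
  obtain ⟨i, hiS, hne, hle⟩ := exists_relIndex_iInf_notMem_le_card hcover hmin hS
  obtain ⟨ih_ne, ih_le⟩ := ih (S.erase i) (Finset.erase_ssubset hiS)
  rw [iInf_notMem_erase] at ih_ne ih_le
  rw [Finset.card_erase_of_mem hiS] at ih_le
  have hmul := relIndex_mul_relIndex (⨅ i, H i) (H i ⊓ ⨅ (j) (_ : j ∉ S), H j) _
    (le_inf (iInf_le H i) (le_iInf₂ fun j _ => iInf_le H j)) inf_le_right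
  rw [inf_relIndex_right] at hmul
  rw [← hmul]
  refine ⟨mul_ne_zero ih_ne hne, ?_⟩
  calc _ ≤ (S.card - 1).factorial * S.card := Nat.mul_le_mul ih_le hle
    _ = S.card.factorial := by rw [mul_comm, Nat.mul_factorial_pred hS.card_pos.ne']

end Subgroup

theorem stmt_16_general (G : Type*) [Group G] (k : ℕ)
    (a : Fin k → G) (H : Fin k → Subgroup G)
    (hcover : ∀ x : G, ∃ i, x ∈ a i • (H i : Set G))
    (hmin : ∀ j : Fin k, ∃ x : G, ∀ i, i ≠ j → x ∉ a i • (H i : Set G)) :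
    (⨅ i, H i).index ≠ 0 ∧ (⨅ i, H i).index ≤ k.factorial := by
  simpa using Subgroup.relIndex_iInf_iInf_notMem_le_factorial hcover hmin Finset.univ

open Pointwise in
theorem stmt_16 (G : Type*) [Group G] (k : ℕ) (hk : 0 < k)
    (a : Fin k → G) (H : Fin k → Subgroup G)
    (hcover : ∀ x : G, ∃ i, x ∈ a i • (H i : Set G))
    (hmin : ∀ j : Fin k, ∃ x : G, ∀ i, i ≠ j → x ∉ a i • (H i : Set G)) :
    (⨅ i, H i).index ≠ 0 ∧ (⨅ i, H i).index ≤ k.factorial :=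
  stmt_16_general G k a H hcover hmin
end

section
/- Sun's lemma on subnormal subgroups: if G_1,…,G_k are subnormal subgroups of a group G, each of finite index, then the index [G : ⋂_{i=1}^k G_i] divides the product ∏_{i=1}^k [G : G_i]; consequently every prime dividing [G : ⋂_{i=1}^k G_i] divides some [G : G_i]. -/
/-!
For `H ⊴ L` and any `K`, `[L ⊓ K : H ⊓ K]` divides `[L : H]` (the relative index of a normal
subgroup of `L`), so `[K : H ⊓ K] = [L ⊓ K : H ⊓ K] [K : L ⊓ K]` divides `[L : H] [G : L] = [G : H]`
as soon as `[K : L ⊓ K] ∣ [G : L]`. Climbing a subnormal series gives `[K : H ⊓ K] ∣ [G : H]` for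
every subnormal `H`, and `[G : H ⊓ K] = [K : H ⊓ K] [G : K]` lets one intersect the `G_i` one at
a time.
-/

/-- A subgroup `H` of `G` is subnormal if there is a chain
`H = H_0 ⊴ H_1 ⊴ ⋯ ⊴ H_n = G` with each term normal in the next. -/
def IsSubnormal {G : Type*} [Group G] (H : Subgroup G) : Prop :=
  ∃ (n : ℕ) (c : Fin (n + 1) → Subgroup G), c 0 = H ∧ c (Fin.last n) = ⊤ ∧
    ∀ i : Fin n, c i.castSucc ≤ c i.succ ∧
      ((c i.castSucc).subgroupOf (c i.succ)).Normal

theorem IsSubnormal.subgroup_isSubnormal {G : Type*} [Group G] {H : Subgroup G}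
    (h : IsSubnormal H) : H.IsSubnormal := by
  obtain ⟨n, c, rfl, hlast, hchain⟩ := h
  refine Fin.reverseInduction (motive := fun i => (c i).IsSubnormal) ?_ (fun i ih => ?_) 0
  · exact hlast ▸ .top
  · exact .step _ _ (hchain i).1 ih (hchain i).2

namespace Subgroup

variable {G : Type*} [Group G]

theorem relIndex_inf_dvd_relIndex_of_normal {H L : Subgroup G} (hN : (H.subgroupOf L).Normal)
    (K : Subgroup G) : H.relIndex (L ⊓ K) ∣ H.relIndex L := by
  rw [← relIndex_subgroupOf inf_le_left]
  exact relIndex_dvd_index_of_normal _ _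

theorem IsSubnormal.relIndex_dvd_index {H : Subgroup G} (hH : H.IsSubnormal) (K : Subgroup G) :
    H.relIndex K ∣ H.index := by
  induction hH with
  | top => simp
  | step H L hle _ hN ih =>
    calc H.relIndex K = H.relIndex (L ⊓ K) * L.relIndex K := by
          rw [relIndex_inf_mul_relIndex, inf_of_le_left hle]
      _ ∣ H.relIndex L * L.index := mul_dvd_mul (relIndex_inf_dvd_relIndex_of_normal hN K) ih
      _ = H.index := relIndex_mul_index hle

theorem index_inf_eq_relIndex_mul_index (H K : Subgroup G) :
    (H ⊓ K).index = H.relIndex K * K.index := by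
  rw [← inf_relIndex_right H K, relIndex_mul_index inf_le_right]

theorem index_iInf_dvd_prod_index_of_isSubnormal {ι : Type*} [Fintype ι] {f : ι → Subgroup G}
    (hf : ∀ i, (f i).IsSubnormal) : (⨅ i, f i).index ∣ ∏ i, (f i).index := by
  classical
  rw [← Finset.inf_univ_eq_iInf]
  induction (Finset.univ : Finset ι) using Finset.induction with
  | empty => simp
  | insert a s ha ih =>
    rw [Finset.inf_insert, Finset.prod_insert ha, index_inf_eq_relIndex_mul_index]
    exact mul_dvd_mul ((hf a).relIndex_dvd_index _) ih

end Subgroup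

theorem stmt_19_general (G : Type*) [Group G] (k : ℕ) (H : Fin k → Subgroup G)
    (hsub : ∀ i, IsSubnormal (H i)) :
    (⨅ i, H i).index ∣ ∏ i, (H i).index ∧
      ∀ p : ℕ, p.Prime → p ∣ (⨅ i, H i).index → ∃ i, p ∣ (H i).index := by
  have hdvd := Subgroup.index_iInf_dvd_prod_index_of_isSubnormal
    fun i => (hsub i).subgroup_isSubnormal
  refine ⟨hdvd, fun p hp hp_dvd => ?_⟩
  obtain ⟨i, -, hi⟩ := hp.prime.exists_mem_finset_dvd (hp_dvd.trans hdvd)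
  exact ⟨i, hi⟩

theorem stmt_19 (G : Type*) [Group G] (k : ℕ) (H : Fin k → Subgroup G)
    (hsub : ∀ i, IsSubnormal (H i)) (hfin : ∀ i, (H i).index ≠ 0) :
    (⨅ i, H i).index ∣ ∏ i, (H i).index ∧
      ∀ p : ℕ, p.Prime → p ∣ (⨅ i, H i).index → ∃ i, p ∣ (H i).index :=
  stmt_19_general G k H hsub
end
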